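/- Let N be a squarefree odd positive integer. If 19 divides N, then there exist integers x, y, z with x^2 + 2y^2 + 5z^2 + xz = N. If 31 divides N, then there exist integers x, y, z with x^2 + 3y^2 + 6z^2 + xy + 2yz = N. If 37 divides N, then there exist integers x, y, z with x^2 + 3y^2 + 7z^2 + xy + xz = N. -/

import Mathlib

/-!
The form `x² + y² + z² + xy + yz + zx` is half the norm form of the lattice `D₃`, so it represents
every `m` for which `2m` is a sum of three squares. Each of the three target forms `f` satisfies
`f ∘ L = p · (x² + y² + z² + xy + yz + zx)` for an explicit integral substitution `L`
(`p = 19, 31, 37`), so writing `N = p m` with `m` odd it remains to show that `2m` is a sum of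
three squares.

For this, Dirichlet's theorem gives a prime `q ≡ 2m - 1 (mod 8m)`. Then `2m` is a square mod `q` by
quadratic reciprocity and `-q ≡ 1` is a square mod `2m`, so Legendre's theorem solves
`X² + qY² = 2mZ²` with `Z ≠ 0`. Since `q ≡ 1 (mod 4)` is a sum of two squares, `2mZ²` is a sum of
three squares, and the Davenport–Cassels descent removes the denominator `Z`.
-/

theorem Int.exists_four_mul_sq_sub_mul_le_sq (t : ℤ) {D : ℤ} (hD : 0 < D) :
    ∃ a : ℤ, 4 * (t - a * D) ^ 2 ≤ D ^ 2 := by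
  have hdiv : t - t / D * D = t % D := by rw [Int.emod_def]; ring
  have h0 := Int.emod_nonneg t hD.ne'
  have h1 := Int.emod_lt_of_pos t hD
  obtain h | h := le_or_gt (2 * (t % D)) D
  · exact ⟨t / D, by rw [hdiv]; nlinarith⟩
  · exact ⟨t / D + 1, by rw [show t - (t / D + 1) * D = t % D - D by linarith]; nlinarith⟩

/-- The line through the lattice point `(a, b, c)` and the point `(u, v, w) / D` of the sphere
`x² + y² + z² = n` meets the sphere again in a point with denominator `D'`, where `D * D'` is the
squared distance `|(u, v, w) - D (a, b, c)|² ≤ 3 D² / 4`. -/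
theorem exists_lt_sum_three_sq_eq_mul_sq {n D u v w a b c : ℤ} (hD : 0 < D)
    (h : u ^ 2 + v ^ 2 + w ^ 2 = n * D ^ 2) (ha : 4 * (u - a * D) ^ 2 ≤ D ^ 2)
    (hb : 4 * (v - b * D) ^ 2 ≤ D ^ 2) (hc : 4 * (w - c * D) ^ 2 ≤ D ^ 2)
    (hne : (u - a * D) ^ 2 + (v - b * D) ^ 2 + (w - c * D) ^ 2 ≠ 0) :
    ∃ D' : ℕ, 0 < D' ∧ (D' : ℤ) < D ∧
      ∃ u' v' w' : ℤ, u' ^ 2 + v' ^ 2 + w' ^ 2 = n * (D' : ℤ) ^ 2 := by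
  set A := a ^ 2 + b ^ 2 + c ^ 2
  set D' := D * n - 2 * (a * u + b * v + c * w) + D * A
  have hDD' : D * D' = (u - a * D) ^ 2 + (v - b * D) ^ 2 + (w - c * D) ^ 2 := by
    linear_combination -h
  have hpos : 0 < D * D' := hDD' ▸ lt_of_le_of_ne (by positivity) (Ne.symm hne)
  have hD'0 : 0 < D' := pos_of_mul_pos_right hpos hD.le
  have hD'D : D' < D := by nlinarith
  refine ⟨D'.toNat, by omega, by omega, D' * a + (A - n) * (u - a * D),
    D' * b + (A - n) * (v - b * D), D' * c + (A - n) * (w - c * D), ?_⟩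
  rw [Int.toNat_of_nonneg hD'0.le]
  linear_combination (A - n) ^ 2 * h

theorem Int.exists_sum_three_sq_of_sum_three_sq_eq_mul_sq {n : ℤ} {d : ℕ} (hd : 0 < d)
    {u v w : ℤ} (h : u ^ 2 + v ^ 2 + w ^ 2 = n * (d : ℤ) ^ 2) :
    ∃ x y z : ℤ, x ^ 2 + y ^ 2 + z ^ 2 = n := by
  induction d using Nat.strong_induction_on generalizing u v w with
  | _ d ih =>
  have hD : (0 : ℤ) < d := by exact_mod_cast hd
  obtain ⟨a, ha⟩ := Int.exists_four_mul_sq_sub_mul_le_sq u hD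
  obtain ⟨b, hb⟩ := Int.exists_four_mul_sq_sub_mul_le_sq v hD
  obtain ⟨c, hc⟩ := Int.exists_four_mul_sq_sub_mul_le_sq w hD
  by_cases hne : (u - a * d) ^ 2 + (v - b * d) ^ 2 + (w - c * d) ^ 2 = 0
  · refine ⟨a, b, c, mul_right_cancel₀ (pow_pos hD 2).ne' ?_⟩
    have hu : u = a * d := by nlinarith
    have hv : v = b * d := by nlinarith
    have hw : w = c * d := by nlinarith
    rw [← h, hu, hv, hw]
    ring
  · obtain ⟨d', hd'0, hd'd, u', v', w', h'⟩ :=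
      exists_lt_sum_three_sq_eq_mul_sq hD h ha hb hc hne
    exact ih d' (by exact_mod_cast hd'd) hd'0 h'

theorem Nat.sq_sub_le_of_le_sqrt {n i j : ℕ} (hi : i ≤ n.sqrt) (hj : j ≤ n.sqrt) :
    ((i : ℤ) - j) ^ 2 ≤ n := by
  have hn : ((n.sqrt : ℕ) : ℤ) ^ 2 ≤ n := by exact_mod_cast Nat.sqrt_le' n
  have hi' : (i : ℤ) ≤ n.sqrt := by exact_mod_cast hi
  have hj' : (j : ℤ) ≤ n.sqrt := by exact_mod_cast hj
  nlinarith [Int.natCast_nonneg i, Int.natCast_nonneg j]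

theorem Nat.mul_lt_sqrt_succ_mul_sqrt_succ_mul_sqrt_succ (a b : ℕ) :
    a * b < ((a * b).sqrt + 1) * ((a.sqrt + 1) * (b.sqrt + 1)) := by
  refine lt_of_pow_lt_pow_left₀ 2 (Nat.zero_le _) ?_
  calc (a * b) ^ 2 = (a * b) * (a * b) := sq _
    _ < ((a * b).sqrt + 1) ^ 2 * ((a.sqrt + 1) ^ 2 * (b.sqrt + 1) ^ 2) :=
      Nat.mul_lt_mul'' (Nat.lt_succ_sqrt' _)
        (Nat.mul_lt_mul'' (Nat.lt_succ_sqrt' a) (Nat.lt_succ_sqrt' b))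
    _ = _ := by ring

theorem exists_ne_zero_small_dvd_sub_mul (a b : ℕ) [NeZero a] [NeZero b] (r s : ℤ) :
    ∃ x y z : ℤ, ¬(x = 0 ∧ y = 0 ∧ z = 0) ∧ x ^ 2 ≤ a * b ∧ y ^ 2 ≤ a ∧ z ^ 2 ≤ b ∧
      (a : ℤ) ∣ x - s * y ∧ (b : ℤ) ∣ x - r * z := by
  let box :=
    Finset.range ((a * b).sqrt + 1) ×ˢ Finset.range (a.sqrt + 1) ×ˢ Finset.range (b.sqrt + 1)
  let f : ℕ × ℕ × ℕ → ZMod a × ZMod b := fun t =>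
    (((t.1 - s * t.2.1 : ℤ) : ZMod a), ((t.1 - r * t.2.2 : ℤ) : ZMod b))
  have hcard : (Finset.univ : Finset (ZMod a × ZMod b)).card < box.card := by
    simpa [box] using Nat.mul_lt_sqrt_succ_mul_sqrt_succ_mul_sqrt_succ a b
  obtain ⟨⟨x₁, y₁, z₁⟩, h₁, ⟨x₂, y₂, z₂⟩, h₂, hne, hf⟩ :=
    Finset.exists_ne_map_eq_of_card_lt_of_maps_to hcard (f := f) fun t _ =>
      Finset.mem_coe.2 (Finset.mem_univ _)
  simp only [box, Finset.mem_product, Finset.mem_range, Nat.lt_succ_iff] at h₁ h₂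
  simp only [f, Prod.ext_iff, ZMod.intCast_eq_intCast_iff_dvd_sub] at hf
  refine ⟨x₁ - x₂, y₁ - y₂, z₁ - z₂, fun h0 => hne ?_, Nat.sq_sub_le_of_le_sqrt h₁.1 h₂.1,
    Nat.sq_sub_le_of_le_sqrt h₁.2.1 h₂.2.1, Nat.sq_sub_le_of_le_sqrt h₁.2.2 h₂.2.2, ?_, ?_⟩
  · simp only [Prod.mk.injEq]; omega
  · exact (dvd_neg.mpr hf.1).trans (dvd_of_eq (by ring))
  · exact (dvd_neg.mpr hf.2).trans (dvd_of_eq (by ring))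

theorem Int.sq_ne_natCast_of_not_isSquare {a : ℕ} (ha : ¬IsSquare a) (y : ℤ) : y ^ 2 ≠ a :=
  fun h => ha (Int.isSquare_natCast_iff.mp ⟨y, by rw [← h, sq]⟩)

/-- Multiplicativity of the norm form of `ℤ[√-b]`:
`(x² + b y²)(z² + b) = (xz + by)² + b (yz - x)²`. -/
theorem exists_sq_add_mul_sq_eq_mul_sq_of_eq_mul_add {a b x y z : ℤ} (hb : 0 < b)
    (h : x ^ 2 + b * y ^ 2 = a * z ^ 2 + a * b) :
    ∃ X Y Z : ℤ, Z ≠ 0 ∧ X ^ 2 + b * Y ^ 2 = a * Z ^ 2 :=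
  ⟨x * z + b * y, y * z - x, z ^ 2 + b, by positivity, by linear_combination (z ^ 2 + b) * h⟩

/-- Legendre's theorem for `X² + b Y² = a Z²`: a small nonzero solution of the congruences makes
`x² + b y² - a z²` a multiple of `a b` lying in `(-a b, 2 a b)`. -/
theorem exists_sq_add_mul_sq_eq_mul_sq {a b : ℕ} (ha : ¬IsSquare a) (hb : ¬IsSquare b)
    (hab : a.Coprime b) {r s : ℤ} (hr : (b : ℤ) ∣ r ^ 2 - a) (hs : (a : ℤ) ∣ s ^ 2 + b) :
    ∃ X Y Z : ℤ, Z ≠ 0 ∧ X ^ 2 + b * Y ^ 2 = a * Z ^ 2 := by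
  have : NeZero a := ⟨fun h => ha (h ▸ IsSquare.zero)⟩
  have : NeZero b := ⟨fun h => hb (h ▸ IsSquare.zero)⟩
  obtain ⟨x, y, z, hne, hx, hy, hz, ⟨k, hk⟩, ⟨l, hl⟩⟩ := exists_ne_zero_small_dvd_sub_mul a b r s
  replace hy : y ^ 2 < a := lt_of_le_of_ne hy (Int.sq_ne_natCast_of_not_isSquare ha y)
  replace hz : z ^ 2 < b := lt_of_le_of_ne hz (Int.sq_ne_natCast_of_not_isSquare hb z)
  obtain ⟨k', hk'⟩ := hs
  obtain ⟨l', hl'⟩ := hr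
  have hFa : (a : ℤ) ∣ x ^ 2 + b * y ^ 2 - a * z ^ 2 :=
    ⟨k * (x + s * y) + k' * y ^ 2 - z ^ 2, by linear_combination (x + s * y) * hk + y ^ 2 * hk'⟩
  have hFb : (b : ℤ) ∣ x ^ 2 + b * y ^ 2 - a * z ^ 2 :=
    ⟨l * (x + r * z) + l' * z ^ 2 + y ^ 2, by linear_combination (x + r * z) * hl + z ^ 2 * hl'⟩
  obtain ⟨j, hj⟩ := (Nat.isCoprime_iff_coprime.mpr hab).mul_dvd hFa hFb
  have ha0 : (0 : ℤ) < a := by exact_mod_cast Nat.pos_of_neZero a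
  have hb0 : (0 : ℤ) < b := by exact_mod_cast Nat.pos_of_neZero b
  have hj1 : j < 2 := by nlinarith
  have hj0 : -1 < j := by nlinarith
  obtain rfl | rfl : j = 0 ∨ j = 1 := by omega
  · refine ⟨x, y, z, fun hz0 => hne ⟨?_, ?_, hz0⟩, by linarith⟩ <;> subst hz0 <;> nlinarith
  · exact exists_sq_add_mul_sq_eq_mul_sq_of_eq_mul_add (x := x) (y := y) (z := z) hb0
      (by linarith)

theorem Nat.not_isSquare_two_mul_of_odd {m : ℕ} (hm : Odd m) : ¬IsSquare (2 * m) := by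
  rintro ⟨k, hk⟩
  obtain ⟨j, rfl⟩ : 2 ∣ k := (Nat.prime_two.dvd_mul.mp ⟨m, hk.symm⟩).elim id id
  have := Nat.odd_iff.mp hm
  rw [show 2 * j * (2 * j) = 4 * (j * j) by ring] at hk
  omega

theorem ZMod.exists_dvd_sq_sub_of_isSquare {p : ℕ} {x : ℤ} (h : IsSquare (x : ZMod p)) :
    ∃ r : ℤ, (p : ℤ) ∣ r ^ 2 - x := by
  obtain ⟨ρ, hρ⟩ := h
  obtain ⟨r, rfl⟩ := ZMod.intCast_surjective ρ
  exact ⟨r, (ZMod.intCast_eq_intCast_iff_dvd_sub _ _ _).mp (by push_cast; rw [hρ, sq])⟩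

theorem exists_prime_gt_modEq_two_mul_sub_one {m : ℕ} (hm : Odd m) :
    ∃ q : ℕ, q.Prime ∧ 2 * m < q ∧ q ≡ 2 * m - 1 [MOD 8 * m] := by
  have : NeZero (8 * m) := ⟨by have := hm.pos; omega⟩
  have hunit : IsUnit ((2 * m - 1 : ℕ) : ZMod (8 * m)) := by
    refine (ZMod.isUnit_iff_coprime _ _).mpr (Nat.isCoprime_iff_coprime.mp ?_)
    obtain ⟨k, rfl⟩ := hm
    -- `(4k + 1)² - 8 (2k + 1) k = 1`
    rw [show 2 * (2 * k + 1) - 1 = 4 * k + 1 by omega]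
    exact ⟨4 * k + 1, -k, by push_cast; ring⟩
  obtain ⟨q, hgt, hq, hqm⟩ := Nat.forall_exists_prime_gt_and_eq_mod hunit (2 * m)
  exact ⟨q, hq, hgt, (ZMod.natCast_eq_natCast_iff _ _ _).mp hqm⟩

theorem two_mul_dvd_add_one_of_modEq {m q : ℕ} (hm : 0 < m) (hq : q ≡ 2 * m - 1 [MOD 8 * m]) :
    2 * m ∣ q + 1 := by
  have h : q + 1 ≡ 2 * m [MOD 2 * m * 4] := by
    have := hq.add_right 1
    rwa [Nat.sub_add_cancel (by omega), show 8 * m = 2 * m * 4 by ring] at this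
  exact Nat.modEq_zero_iff_dvd.mp ((h.of_mul_right 4).trans (Nat.modEq_zero_iff_dvd.mpr dvd_rfl))

theorem jacobiSym_two_mul_eq_one_of_modEq {m q : ℕ} (hm : Odd m)
    (hq : q ≡ 2 * m - 1 [MOD 8 * m]) : jacobiSym (2 * m) q = 1 := by
  have hm2 := Nat.odd_iff.mp hm
  have h8 : q % 8 = (2 * m - 1) % 8 := hq.of_mul_right m
  have hmq : (m : ℤ) ∣ -1 - q := by
    have := (dvd_mul_left m 2).trans (two_mul_dvd_add_one_of_modEq hm.pos hq)
    rw [show (-1 : ℤ) - q = -((q + 1 : ℕ) : ℤ) by push_cast; ring, dvd_neg]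
    exact_mod_cast this
  rw [jacobiSym.mul_left, jacobiSym.at_two (Nat.odd_iff.mpr (by omega)),
    ← jacobiSym.quadratic_reciprocity_one_mod_four (by omega) hm,
    jacobiSym.mod_left' (Int.modEq_iff_dvd.mpr hmq), jacobiSym.at_neg_one hm,
    ZMod.χ₈_nat_eq_if_mod_eight, ZMod.χ₄_nat_eq_if_mod_four]
  have : q % 8 = 1 ∨ q % 8 = 7 ↔ m % 4 = 1 := by omega
  split_ifs <;> simp_all <;> omega

theorem exists_sum_three_sq_two_mul_of_odd {m : ℕ} (hm : Odd m) :
    ∃ x y z : ℤ, x ^ 2 + y ^ 2 + z ^ 2 = 2 * m := by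
  obtain ⟨q, hq, hmq, hqm⟩ := exists_prime_gt_modEq_two_mul_sub_one hm
  have h8 : q % 8 = (2 * m - 1) % 8 := hqm.of_mul_right m
  have hm2 := Nat.odd_iff.mp hm
  have : Fact q.Prime := ⟨hq⟩
  obtain ⟨r, hr⟩ := ZMod.exists_dvd_sq_sub_of_isSquare
    (ZMod.isSquare_of_jacobiSym_eq_one (jacobiSym_two_mul_eq_one_of_modEq hm hqm))
  have hcop : (2 * m).Coprime q :=
    ((Nat.Prime.coprime_iff_not_dvd hq).mpr fun h => (Nat.le_of_dvd (by omega) h).not_gt hmq).symm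
  obtain ⟨X, Y, Z, hZ, hXYZ⟩ := exists_sq_add_mul_sq_eq_mul_sq
    (Nat.not_isSquare_two_mul_of_odd hm) hq.prime.not_isSquare hcop (r := r) (s := 1)
    (by push_cast; exact hr)
    (by rw [one_pow, add_comm]; exact_mod_cast two_mul_dvd_add_one_of_modEq hm.pos hqm)
  obtain ⟨c, d, hcd⟩ := Nat.Prime.sq_add_sq (p := q) (by omega)
  refine Int.exists_sum_three_sq_of_sum_three_sq_eq_mul_sq (u := X) (v := c * Y) (w := d * Y)
    (Int.natAbs_pos.mpr hZ) ?_
  have hq' : (q : ℤ) = c ^ 2 + d ^ 2 := by exact_mod_cast hcd.symm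
  rw [Int.natCast_natAbs, sq_abs]
  push_cast [hq'] at hXYZ
  linear_combination hXYZ

/-- Half the norm form of the lattice `D₃ = {v ∈ ℤ³ | v₁ + v₂ + v₃ even}` in the basis
`(1, 1, 0), (0, 1, 1), (1, 0, 1)`. -/
def d3Form (x y z : ℤ) : ℤ := x ^ 2 + y ^ 2 + z ^ 2 + x * y + y * z + z * x

theorem exists_d3Form_eq_of_sum_three_sq_eq_two_mul {m r s t : ℤ}
    (h : r ^ 2 + s ^ 2 + t ^ 2 = 2 * m) : ∃ x y z : ℤ, d3Form x y z = m := by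
  have heven : Even (r ^ 2 + s ^ 2 + t ^ 2) := ⟨m, by rw [h]; ring⟩
  obtain ⟨k, hk⟩ : Even (r + s - t) := by simpa [parity_simps] using heven
  obtain rfl : t = r + s - 2 * k := by linarith
  refine ⟨k, s - k, r - k, mul_left_cancel₀ two_ne_zero ?_⟩
  unfold d3Form
  linear_combination h

theorem exists_eq_of_dvd_of_forall_exists_eq_mul_d3Form (f : ℤ → ℤ → ℤ → ℤ) (p : ℕ)
    (hf : ∀ x y z, ∃ X Y Z, f X Y Z = p * d3Form x y z) {N : ℕ} (hN : Odd N) (hp : p ∣ N) :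
    ∃ X Y Z, f X Y Z = N := by
  obtain ⟨m, rfl⟩ := hp
  obtain ⟨r, s, t, hrst⟩ := exists_sum_three_sq_two_mul_of_odd (Nat.odd_mul.mp hN).2
  obtain ⟨x, y, z, hm⟩ := exists_d3Form_eq_of_sum_three_sq_eq_two_mul hrst
  obtain ⟨X, Y, Z, hXYZ⟩ := hf x y z
  exact ⟨X, Y, Z, by rw [hXYZ, hm]; push_cast; ring⟩

theorem squarefree_odd_represented_general
    (N : ℕ) (hodd : Odd N) :
    (19 ∣ N → ∃ x y z : ℤ, x ^ 2 + 2 * y ^ 2 + 5 * z ^ 2 + x * z = (N : ℤ)) ∧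
    (31 ∣ N → ∃ x y z : ℤ, x ^ 2 + 3 * y ^ 2 + 6 * z ^ 2 + x * y + 2 * y * z = (N : ℤ)) ∧
    (37 ∣ N → ∃ x y z : ℤ, x ^ 2 + 3 * y ^ 2 + 7 * z ^ 2 + x * y + x * z = (N : ℤ)) := by
  refine ⟨exists_eq_of_dvd_of_forall_exists_eq_mul_d3Form _ 19 ?_ hodd,
    exists_eq_of_dvd_of_forall_exists_eq_mul_d3Form _ 31 ?_ hodd,
    exists_eq_of_dvd_of_forall_exists_eq_mul_d3Form _ 37 ?_ hodd⟩ <;> intro x y z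
  · exact ⟨-4 * x - 3 * y - z, -x - y - 3 * z, x - y, by unfold d3Form; ring⟩
  · exact ⟨-5 * x - 5 * y - 4 * z, y + 3 * z, -x + y - z, by unfold d3Form; ring⟩
  · exact ⟨-6 * x - 5 * y - 3 * z, 3 * y + 2 * z, x + 2 * z, by unfold d3Form; ring⟩

theorem squarefree_odd_represented
    (N : ℕ) (hN : 0 < N) (hsf : Squarefree N) (hodd : Odd N) :
    (19 ∣ N → ∃ x y z : ℤ, x ^ 2 + 2 * y ^ 2 + 5 * z ^ 2 + x * z = (N : ℤ)) ∧
    (31 ∣ N → ∃ x y z : ℤ, x ^ 2 + 3 * y ^ 2 + 6 * z ^ 2 + x * y + 2 * y * z = (N : ℤ)) ∧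
    (37 ∣ N → ∃ x y z : ℤ, x ^ 2 + 3 * y ^ 2 + 7 * z ^ 2 + x * y + x * z = (N : ℤ)) :=
  squarefree_odd_represented_general N hodd
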